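/- Let x ∈ A^ℤ be a non-periodic Toeplitz sequence over a finite alphabet A with period structure (p_k)_{k≥1}, let X be the closure of the σ-orbit of x, and let c ≥ 1 be an integer. Then (X, σ^c) is a Toeplitz flow (i.e., topologically conjugate to the closure of the σ-orbit of some Toeplitz sequence over some finite alphabet) if and only if gcd(c, p_k) = 1 for all k. -/

import Mathlib

open Set Topology Classical

noncomputable section

/-- The left shift `σ` on bi-infinite sequences: `(σ x) n = x (n+1)`. -/
def shiftMap {A : Type} (x : ℤ → A) : ℤ → A := fun n => x (n + 1)

/-- The shift by an integer amount: `shiftZ n x = σ^n x`. -/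
def shiftZ {A : Type} (n : ℤ) (x : ℤ → A) : ℤ → A := fun m => x (m + n)

/-- A bi-infinite sequence is Toeplitz if every coordinate is periodically repeated. -/
def IsToeplitz {A : Type} (x : ℤ → A) : Prop :=
  ∀ i : ℤ, ∃ p : ℕ, 0 < p ∧ ∀ k : ℤ, x (i + k * (p : ℤ)) = x i

/-- The closure of the full shift orbit of `x`. -/
def orbitClosure {A : Type} [TopologicalSpace A] (x : ℤ → A) : Set (ℤ → A) :=
  closure {y | ∃ n : ℤ, shiftZ n x = y}

/-- The finite word `x_i x_{i+1} ⋯ x_{i+n-1}`. -/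
def seqWord {A : Type} (x : ℤ → A) (i : ℤ) (n : ℕ) : List A :=
  List.ofFn fun m : Fin n => x (i + (m : ℕ))

/-- Iterates `θ^k` of a substitution, applied to a letter. -/
def substPow {A : Type} (θ : A → List A) : ℕ → A → List A
  | 0, a => [a]
  | k + 1, a => (θ a).flatMap (substPow θ k)

/-- The substitution subshift of `θ`: all sequences whose finite subwords occur in
some `θ^k(a)`. -/
def substShift {A : Type} (θ : A → List A) : Set (ℤ → A) :=
  {x | ∀ i : ℤ, ∀ n : ℕ, ∃ (k : ℕ) (a : A), (seqWord x i n).IsInfix (substPow θ k a)}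

/-- The full orbit of `x` under an (invertible) map `S`, within the set `X`. -/
def orbitIn {α : Type} (S : α → α) (X : Set α) (x : α) : Set α :=
  {y | y ∈ X ∧ ∃ n : ℕ, S^[n] x = y ∨ S^[n] y = x}

/-- Every `S`-orbit within `X` is dense in `X`. -/
def MinimalOn {α : Type} [TopologicalSpace α] (S : α → α) (X : Set α) : Prop :=
  ∀ x ∈ X, X ⊆ closure (orbitIn S X x)

/-- Every `T`-orbit in `X` is the union of exactly `c` distinct `S`-orbits. -/
def OrbitNumberOn {α : Type} (T S : α → α) (X : Set α) (c : ℕ) : Prop :=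
  ∀ x ∈ X, ∃ r : Fin c → α,
    (∀ i, r i ∈ orbitIn T X x) ∧
    (∀ i j, i ≠ j → r j ∉ orbitIn S X (r i)) ∧
    (∀ y ∈ orbitIn T X x, ∃ i, y ∈ orbitIn S X (r i))

/-- `S` restricts to a homeomorphism of the subset `X`. -/
def RestrictsToHomeomorph {α : Type} [TopologicalSpace α] (S : α → α) (X : Set α) : Prop :=
  ∃ e : X ≃ₜ X, ∀ x : X, (e x : α) = S (x : α)

/-- The systems `(X, S)` and `(Y, R)` are topologically conjugate. -/
def TopConj {α β : Type} [TopologicalSpace α] [TopologicalSpace β]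
    (X : Set α) (S : α → α) (Y : Set β) (R : β → β) : Prop :=
  ∃ (hS : Set.MapsTo S X X) (hR : Set.MapsTo R Y Y) (h : X ≃ₜ Y),
    ∀ x : X, h (Set.MapsTo.restrict S X X hS x) = Set.MapsTo.restrict R Y Y hR (h x)

/-- `(Y, R)` is a topological factor of `(X, S)`. -/
def IsFactorOn {α β : Type} [TopologicalSpace α] [TopologicalSpace β]
    (X : Set α) (S : α → α) (Y : Set β) (R : β → β) : Prop :=
  ∃ F : α → β, Set.MapsTo F X Y ∧ ContinuousOn F X ∧ Set.SurjOn F X Y ∧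
    ∀ x ∈ X, F (S x) = R (F x)

/-- `(X, S)` is a Toeplitz flow: it is topologically conjugate to the orbit closure of
some Toeplitz sequence over some finite alphabet, with the shift map. -/
def IsToeplitzFlow {α : Type} [TopologicalSpace α] (X : Set α) (S : α → α) : Prop :=
  ∃ (B : Type) (_ : Fintype B) (z : ℤ → B), IsToeplitz z ∧
    (letI : TopologicalSpace B := ⊥
     TopConj X S (orbitClosure z) shiftMap)

/-- `Per_p(x)`: the set of positions where `x` is periodic with period `p`. -/
def PerSet {A : Type} (x : ℤ → A) (p : ℕ) : Set ℤ :=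
  {k | ∀ n : ℤ, x (k + n * (p : ℤ)) = x k}

/-- `p` is an essential period of `x`. -/
def IsEssentialPeriod {A : Type} (x : ℤ → A) (p : ℕ) : Prop :=
  0 < p ∧ ¬ ∃ q : ℕ, 0 < q ∧ q < p ∧
    ((fun k => k + (q : ℤ)) '' PerSet x p = PerSet x p) ∧
    (∀ k ∈ PerSet x p, x (k + (q : ℤ)) = x k)

/-- A period structure for a Toeplitz sequence `x`. -/
def IsPeriodStructure {A : Type} (x : ℤ → A) (p : ℕ → ℕ) : Prop :=
  StrictMono p ∧ (∀ k, IsEssentialPeriod x (p k)) ∧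
  (∀ k, p k ∣ p (k + 1)) ∧ (⋃ k, PerSet x (p k)) = Set.univ

/-- `x` is a (σ-)periodic sequence. -/
def IsPeriodicSeq {A : Type} (x : ℤ → A) : Prop :=
  ∃ n : ℕ, 0 < n ∧ ∀ m : ℤ, x (m + (n : ℤ)) = x m

/-- `z` is the bi-infinite concatenation of the `ψ`-images of the letters of `y`,
with `ψ(y₀)` beginning at coordinate `0`. -/
def IsConcat {B C : Type} (ψ : B → List C) (y : ℤ → B) (z : ℤ → C) : Prop :=
  ∃ s : ℤ → ℤ, s 0 = 0 ∧
    (∀ n : ℤ, s (n + 1) = s n + ((ψ (y n)).length : ℤ)) ∧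
    (∀ n : ℤ, ∀ j : Fin (ψ (y n)).length, z (s n + (j : ℕ)) = (ψ (y n)).get j)

/-- `p(x,n) = Σ_{i<n} p(Sⁱ x)`. -/
def psum {X : Type} (p : X → ℕ) (S : X → X) (x : X) (n : ℕ) : ℕ :=
  ∑ i ∈ Finset.range n, p (S^[i] x)

/-! If `gcd (c, p k) = 1` for all `k`, Bezout on each `Per_{p k}` shows that the `σᶜ`-orbit of `x`
is dense in `X`; hence the `c`-block presentation `y ↦ (n ↦ y (n c) ⋯ y (n c + c - 1))` conjugates
`(X, σᶜ)` to the shift on the orbit closure of the Toeplitz sequence of `c`-blocks of `x`.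

Conversely, a Toeplitz flow is minimal, so a conjugacy makes `x` approximable by `σ^(c n + 1) x`:
on every window `x` has an almost period `≡ 1` modulo `c`. If `d = gcd (c, p K) > 1`, a residue
class `q` modulo `p K` containing such almost periods for arbitrarily large windows is `≡ 1`
modulo `d`, hence nonzero, and `x` restricted to `Per_{p K}` is invariant under the shift by `q`.
This contradicts the essentiality of the period `p K`. -/

open Function Pointwise

section Shift

variable {A : Type}

theorem shiftZ_zero (y : ℤ → A) : shiftZ 0 y = y := by
  funext m; simp [shiftZ]

theorem shiftMap_shiftZ (n : ℤ) (y : ℤ → A) : shiftMap (shiftZ n y) = shiftZ (n + 1) y := by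
  funext m; simp only [shiftMap, shiftZ]; ring_nf

theorem shiftMap_iterate (n : ℕ) (y : ℤ → A) : shiftMap^[n] y = shiftZ n y := by
  induction n with
  | zero => exact (shiftZ_zero y).symm
  | succ n ih => rw [iterate_succ_apply', ih, shiftMap_shiftZ]; push_cast; rfl

variable [TopologicalSpace A]

theorem self_mem_orbitClosure (x : ℤ → A) : x ∈ orbitClosure x :=
  subset_closure ⟨0, shiftZ_zero x⟩

theorem mapsTo_shiftMap_orbitClosure (x : ℤ → A) :
    MapsTo shiftMap (orbitClosure x) (orbitClosure x) :=
  MapsTo.closure (by rintro _ ⟨n, rfl⟩; exact ⟨n + 1, (shiftMap_shiftZ n x).symm⟩)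
    (continuous_pi fun n => continuous_apply (n + 1))

end Shift

theorem mem_closure_iff_forall_finset {ι A : Type*} [TopologicalSpace A] [DiscreteTopology A]
    {S : Set (ι → A)} {y : ι → A} :
    y ∈ closure S ↔ ∀ s : Finset ι, ∃ w ∈ S, ∀ i ∈ s, w i = y i := by
  rw [mem_closure_iff_nhds]
  constructor
  · intro h s
    obtain ⟨w, hw, hwS⟩ := h ((s : Set ι).pi fun i => {y i})
      (set_pi_mem_nhds s.finite_toSet fun i _ => by simp)
    exact ⟨w, hwS, hw⟩
  · intro h t ht
    rw [nhds_pi, Filter.mem_pi'] at ht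
    obtain ⟨s, u, hu, hsu⟩ := ht
    obtain ⟨w, hwS, hw⟩ := h s
    exact ⟨w, hsu fun i hi => (hw i hi).symm ▸ mem_of_mem_nhds (hu i), hwS⟩

section Periods

variable {A : Type} {x : ℤ → A}

theorem perSet_mono {p q : ℕ} (h : p ∣ q) : PerSet x p ⊆ PerSet x q := by
  obtain ⟨t, rfl⟩ := h
  intro k hk n
  simpa [mul_assoc, mul_comm, mul_left_comm] using hk (n * t)

theorem add_mul_mem_perSet {p : ℕ} {k : ℤ} (hk : k ∈ PerSet x p) (s : ℤ) :
    k + s * p ∈ PerSet x p := fun n => by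
  rw [add_assoc, ← add_mul, hk, hk]

theorem exists_finset_subset_perSet_of_dvd {p : ℕ → ℕ} (hdvd : ∀ k, p k ∣ p (k + 1))
    (hcov : ⋃ k, PerSet x (p k) = univ) (s : Finset ℤ) : ∃ K, ↑s ⊆ PerSet x (p K) :=
  (monotone_nat_of_le_succ fun k => perSet_mono (hdvd k)).directed_le
    |>.exists_mem_subset_of_finset_subset_biUnion (hcov ▸ subset_univ _)

theorem IsToeplitz.exists_finset_subset_perSet (hx : IsToeplitz x) (s : Finset ℤ) :
    ∃ P, 0 < P ∧ ↑s ⊆ PerSet x P := by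
  have hcov : ⋃ n : ℕ, PerSet x n.factorial = univ := eq_univ_of_forall fun i => by
    obtain ⟨P, hP, hper⟩ := hx i
    exact mem_iUnion.2 ⟨P, perSet_mono (Nat.dvd_factorial hP le_rfl) hper⟩
  obtain ⟨K, hK⟩ := exists_finset_subset_perSet_of_dvd
    (fun n => Nat.factorial_dvd_factorial n.le_succ) hcov s
  exact ⟨K.factorial, K.factorial_pos, hK⟩

variable {p : ℕ → ℕ}

theorem IsPeriodStructure.pos (hps : IsPeriodStructure x p) (K : ℕ) : 0 < p K := (hps.2.1 K).1

theorem IsPeriodStructure.dvd_of_le (hps : IsPeriodStructure x p) {K M : ℕ} (h : K ≤ M) :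
    p K ∣ p M :=
  Nat.rel_of_forall_rel_succ_of_le (· ∣ ·) hps.2.2.1 h

theorem IsPeriodStructure.exists_finset_subset_perSet (hps : IsPeriodStructure x p)
    (s : Finset ℤ) : ∃ K, ↑s ⊆ PerSet x (p K) :=
  exists_finset_subset_perSet_of_dvd hps.2.2.1 hps.2.2.2 s

theorem not_isEssentialPeriod_of_shift {p q : ℕ} (hq : 0 < q) (hqp : q < p)
    (h : ∀ k ∈ PerSet x p, x (k + q) = x k) : ¬ IsEssentialPeriod x p := by
  have hadd : ∀ k ∈ PerSet x p, k + q ∈ PerSet x p := fun k hk n => by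
    rw [add_right_comm, h _ (add_mul_mem_perSet hk n), hk, h k hk]
  have hiter : ∀ m : ℕ, ∀ k ∈ PerSet x p, k + m * q ∈ PerSet x p := by
    intro m
    induction m with
    | zero => simp
    | succ m ih =>
      intro k hk
      simpa [add_mul, ← add_assoc] using hadd _ (ih k hk)
  refine fun hp => hp.2 ⟨q, hq, hqp, ?_, h⟩
  refine (MapsTo.image_subset hadd).antisymm fun k hk => ⟨k - q, ?_, by ring⟩
  -- `k - q ≡ k + (p - 1) q` modulo `p`
  convert add_mul_mem_perSet (hiter (p - 1) k hk) (-q) using 1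
  rw [show ((p - 1 : ℕ) : ℤ) = p - 1 by omega]
  ring

theorem IsPeriodStructure.shift_of_almostPeriods (hps : IsPeriodStructure x p) {K : ℕ} {q : ℤ}
    (h : ∀ N : ℕ, ∃ r : ℤ, r ≡ q [ZMOD p K] ∧ ∀ i ∈ Finset.Icc (-(N : ℤ)) N, x (i + r) = x i) :
    ∀ k ∈ PerSet x (p K), x (k + q) = x k := by
  intro k hk
  obtain ⟨L, hL⟩ := hps.exists_finset_subset_perSet {k + q}
  set M := max K L
  have hM : k + q ∈ PerSet x (p M) :=
    perSet_mono (hps.dvd_of_le (le_max_right K L)) (hL (by simp))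
  have hpM : (0 : ℤ) < p M := by exact_mod_cast hps.pos M
  obtain ⟨r, hrq, hr⟩ := h (k.natAbs + p M)
  -- `e` is divisible by `p K` and lies in `[0, p M)`, so `k - e` is in the window while
  -- `k - e + r ≡ k + q` modulo `p M`
  set e := (r - q) % p M
  have hediv : e = r - q - p M * ((r - q) / p M) := Int.emod_def _ _
  have he : (p K : ℤ) ∣ e := by
    rw [Int.dvd_iff_emod_eq_zero, Int.emod_emod_of_dvd _
      (Int.natCast_dvd_natCast.2 (hps.dvd_of_le (le_max_left K L)))]
    exact Int.emod_eq_zero_of_dvd hrq.symm.dvd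
  obtain ⟨t, ht⟩ := he
  have he0 : 0 ≤ e := Int.emod_nonneg _ hpM.ne'
  have hep : e < p M := Int.emod_lt_of_pos _ hpM
  calc x (k + q) = x (k + q + (r - q) / p M * p M) := (hM _).symm
    _ = x (k - e + r) := by congr 1; linear_combination hediv
    _ = x (k - e) := hr _ (Finset.mem_Icc.2 ⟨by omega, by omega⟩)
    _ = x k := by rw [ht, show k - p K * t = k + -t * p K by ring]; exact hk _

theorem IsPeriodStructure.coprime_of_almostPeriods (hps : IsPeriodStructure x p) {c : ℕ}
    (h : ∀ s : Finset ℤ, ∃ n : ℕ, ∀ i ∈ s, x (i + (c * n + 1 : ℕ)) = x i) (K : ℕ) :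
    Nat.Coprime c (p K) := by
  have hpK := hps.pos K
  have : NeZero (p K) := ⟨hpK.ne'⟩
  choose n hn using fun N : ℕ => h (Finset.Icc (-(N : ℤ)) N)
  -- pigeonhole: one residue class modulo `p K` contains almost periods for arbitrarily large windows
  obtain ⟨y, hy⟩ := Finite.exists_infinite_fiber fun N => ((c * n N + 1 : ℕ) : ZMod (p K))
  rw [Set.infinite_coe_iff] at hy
  obtain ⟨N₀, hN₀⟩ := hy.nonempty
  set q := (c * n N₀ + 1) % p K
  have hshift : ∀ k ∈ PerSet x (p K), x (k + q) = x k := by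
    refine hps.shift_of_almostPeriods fun N => ?_
    obtain ⟨N', hN', hNN'⟩ := hy.exists_gt N
    refine ⟨_, ?_, fun i hi => hn N' i (Finset.Icc_subset_Icc (by omega) (by omega) hi)⟩
    rw [Int.natCast_modEq_iff]
    exact ((ZMod.natCast_eq_natCast_iff _ _ _).1 (hN'.trans hN₀.symm)).trans
      (Nat.mod_modEq _ _).symm
  by_contra hcop
  have hq : 0 < q := by
    by_contra! hq0
    have hdvd : Nat.gcd c (p K) ∣ c * n N₀ + 1 :=
      (Nat.gcd_dvd_right c (p K)).trans (Nat.dvd_of_mod_eq_zero (by omega))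
    exact hcop (Nat.dvd_one.1 ((Nat.dvd_add_right ((Nat.gcd_dvd_left _ _).mul_right _)).1 hdvd))
  exact not_isEssentialPeriod_of_shift hq (Nat.mod_lt _ hpK) hshift (hps.2.1 K)

end Periods

theorem IsToeplitz.mem_closure_range_iterate {B : Type} [TopologicalSpace B] [DiscreteTopology B]
    {z u v : ℤ → B} (hz : IsToeplitz z) (hu : u ∈ orbitClosure z) (hv : v ∈ orbitClosure z) :
    u ∈ closure (range fun n : ℕ => shiftMap^[n] v) := by
  simp only [shiftMap_iterate]
  refine closure_minimal ?_ isClosed_closure hu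
  rintro _ ⟨k, rfl⟩
  refine mem_closure_iff_forall_finset.2 fun s => ?_
  obtain ⟨P, hP, hsP⟩ := hz.exists_finset_subset_perSet (s.image (· + k))
  obtain ⟨_, ⟨n, rfl⟩, hn⟩ := mem_closure_iff_forall_finset.1 hv (s + Finset.Ico 0 (P : ℤ))
  have hP' : (0 : ℤ) < P := by exact_mod_cast hP
  -- shifting `v` by the representative of `k - n` modulo `P` matches `z` on `s + k`
  set m := (k - n) % P
  have hm0 : 0 ≤ m := Int.emod_nonneg _ hP'.ne'
  have hmdiv : m = k - n - P * ((k - n) / P) := Int.emod_def _ _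
  refine ⟨_, ⟨m.toNat, rfl⟩, fun i hi => ?_⟩
  have him : i + m ∈ s + Finset.Ico 0 (P : ℤ) :=
    Finset.add_mem_add hi (Finset.mem_Ico.2 ⟨hm0, Int.emod_lt_of_pos _ hP'⟩)
  calc shiftZ (m.toNat : ℤ) v i = z (i + m + n) := by
        rw [Int.toNat_of_nonneg hm0]; exact (hn _ him).symm
    _ = z (i + k + -((k - n) / P) * P) := by congr 1; linear_combination hmdiv
    _ = z (i + k) := hsP (Finset.mem_image_of_mem _ hi) _

theorem TopConj.mem_closure_range_iterate {α β : Type} [TopologicalSpace α] [TopologicalSpace β]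
    {X : Set α} {S : α → α} {Y : Set β} {R : β → β} (hconj : TopConj X S Y R)
    (hY : ∀ u ∈ Y, ∀ v ∈ Y, u ∈ closure (range fun n : ℕ => R^[n] v))
    {a b : α} (ha : a ∈ X) (hb : b ∈ X) :
    a ∈ closure (range fun n : ℕ => S^[n] b) := by
  obtain ⟨hS, hR, h, hcomm⟩ := hconj
  have hsemi : Semiconj h (hS.restrict S X X) (hR.restrict R Y Y) := hcomm
  have hY' : h ⟨a, ha⟩ ∈ closure (range fun n : ℕ => (hR.restrict R Y Y)^[n] (h ⟨b, hb⟩)) := by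
    rw [closure_subtype, ← range_comp]
    simpa [comp_def, hR.iterate_restrict] using hY _ (h _).2 _ (h _).2
  have hX : (⟨a, ha⟩ : X) ∈ closure (range fun n : ℕ => (hS.restrict S X X)^[n] ⟨b, hb⟩) := by
    simpa using map_mem_closure h.symm.continuous hY' <| by
      rintro _ ⟨n, rfl⟩
      exact ⟨n, by dsimp only; rw [← (hsemi.iterate_right n).eq, h.symm_apply_apply]⟩
  exact map_mem_closure continuous_subtype_val hX <| by
    rintro _ ⟨n, rfl⟩
    exact ⟨n, by dsimp only; rw [hS.iterate_restrict]; rfl⟩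

theorem exists_almostPeriod_of_isToeplitzFlow {A : Type} [TopologicalSpace A] [DiscreteTopology A]
    {x : ℤ → A} {c : ℕ} (hflow : IsToeplitzFlow (orbitClosure x) (shiftMap^[c]))
    (s : Finset ℤ) : ∃ n : ℕ, ∀ i ∈ s, x (i + (c * n + 1 : ℕ)) = x i := by
  obtain ⟨B, _, z, hz, hconj⟩ := hflow
  let _ : TopologicalSpace B := ⊥
  have : DiscreteTopology B := ⟨rfl⟩
  -- minimality of the Toeplitz flow `(orbitClosure z, σ)` is transported back to `σᶜ`
  have hx : x ∈ closure (range fun n : ℕ => (shiftMap^[c])^[n] (shiftMap x)) :=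
    hconj.mem_closure_range_iterate (fun u hu v hv => hz.mem_closure_range_iterate hu hv)
      (self_mem_orbitClosure x) (mapsTo_shiftMap_orbitClosure x (self_mem_orbitClosure x))
  obtain ⟨_, ⟨n, rfl⟩, hn⟩ := mem_closure_iff_forall_finset.1 hx s
  refine ⟨n, fun i hi => ?_⟩
  rw [← hn i hi]
  dsimp only
  rw [← iterate_mul, ← iterate_succ_apply, shiftMap_iterate]
  rfl

theorem topConj_image {α β : Type} [TopologicalSpace α] [TopologicalSpace β] [T2Space β]
    {X : Set α} {S : α → α} {R : β → β} {F : α → β} (hX : IsCompact X) (hF : Continuous F)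
    (hinj : InjOn F X) (hS : MapsTo S X X) (hFS : ∀ a ∈ X, F (S a) = R (F a)) :
    TopConj X S (F '' X) R := by
  have hR : MapsTo R (F '' X) (F '' X) := by
    rintro _ ⟨a, ha, rfl⟩
    exact ⟨S a, hS ha, hFS a ha⟩
  have : CompactSpace X := isCompact_iff_compactSpace.1 hX
  have he : Continuous (hinj.bijOn_image.equiv F) :=
    (hF.comp continuous_subtype_val).subtype_mk _
  exact ⟨hS, hR, he.homeoOfEquivCompactToT2, fun a => Subtype.ext (hFS a a.2)⟩

theorem isToeplitzFlow_of_topConj {α : Type} [TopologicalSpace α] {X : Set α} {S : α → α}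
    {B : Type} [Fintype B] [t : TopologicalSpace B] [DiscreteTopology B] {z : ℤ → B}
    (hz : IsToeplitz z) (h : TopConj X S (orbitClosure z) shiftMap) : IsToeplitzFlow X S := by
  obtain rfl := DiscreteTopology.eq_bot (t := t)
  exact ⟨B, inferInstance, z, hz, h⟩

section Blocks

variable {A : Type}

def toBlocks (c : ℕ) (y : ℤ → A) : ℤ → Fin c → A := fun n j => y (n * c + j)

theorem toBlocks_injective {c : ℕ} (hc : 0 < c) : Injective (toBlocks (A := A) c) := by
  have hc' : (0 : ℤ) < c := by exact_mod_cast hc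
  have key : ∀ (y : ℤ → A) (m : ℤ), y m =
      toBlocks c y (m / c) ⟨(m % c).toNat, by have := Int.emod_lt_of_pos m hc'; omega⟩ := by
    intro y m
    simp only [toBlocks]
    rw [Int.toNat_of_nonneg (Int.emod_nonneg _ hc'.ne'), Int.ediv_mul_add_emod]
  intro y y' h
  funext m
  rw [key y, key y', h]

theorem toBlocks_shiftZ_mul (c : ℕ) (m : ℤ) (y : ℤ → A) :
    toBlocks c (shiftZ (m * c) y) = shiftZ m (toBlocks c y) := by
  funext n j
  simp only [toBlocks, shiftZ]
  ring_nf

theorem toBlocks_shiftMap_iterate (c : ℕ) (y : ℤ → A) :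
    toBlocks c (shiftMap^[c] y) = shiftMap (toBlocks c y) := by
  rw [shiftMap_iterate, ← one_mul (c : ℤ), toBlocks_shiftZ_mul]
  rfl

theorem IsToeplitz.toBlocks {x : ℤ → A} (hx : IsToeplitz x) (c : ℕ) :
    IsToeplitz (toBlocks c x) := by
  intro n
  obtain ⟨P, hP, hsub⟩ := hx.exists_finset_subset_perSet (Finset.Ico (n * c) (n * c + c))
  refine ⟨P, hP, fun k => funext fun j => ?_⟩
  have hj : n * c + j ∈ Finset.Ico (n * (c : ℤ)) (n * c + c) := by
    simp only [Finset.mem_Ico]; omega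
  simp only [_root_.toBlocks]
  rw [← hsub hj (k * c)]
  ring_nf

variable [TopologicalSpace A]

theorem continuous_toBlocks (c : ℕ) : Continuous (toBlocks (A := A) c) :=
  continuous_pi fun _ => continuous_pi fun _ => continuous_apply _

variable [DiscreteTopology A]

theorem IsPeriodStructure.closure_range_shiftZ_mul {x : ℤ → A} {p : ℕ → ℕ}
    (hps : IsPeriodStructure x p) {c : ℕ} (hcop : ∀ k, Nat.Coprime c (p k)) :
    closure (range fun m : ℤ => shiftZ (m * c) x) = orbitClosure x := by
  refine (closure_mono ?_).antisymm (closure_minimal ?_ isClosed_closure)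
  · rintro _ ⟨m, rfl⟩
    exact ⟨m * c, rfl⟩
  rintro _ ⟨n, rfl⟩
  refine mem_closure_iff_forall_finset.2 fun s => ?_
  obtain ⟨K, hK⟩ := hps.exists_finset_subset_perSet (s.image (· + n))
  obtain ⟨u, v, huv⟩ := Nat.isCoprime_iff_coprime.2 (hcop K)
  refine ⟨_, ⟨n * u, rfl⟩, fun i hi => ?_⟩
  simp only [shiftZ]
  rw [← hK (Finset.mem_image_of_mem _ hi) (-(n * v))]
  congr 1
  linear_combination n * huv

theorem image_toBlocks_orbitClosure [Finite A] {x : ℤ → A} {p : ℕ → ℕ}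
    (hps : IsPeriodStructure x p) {c : ℕ} (hcop : ∀ k, Nat.Coprime c (p k)) :
    toBlocks c '' orbitClosure x = orbitClosure (toBlocks c x) := by
  rw [← hps.closure_range_shiftZ_mul hcop, ← (continuous_toBlocks c).isClosedMap
    |>.closure_image_eq_of_continuous (continuous_toBlocks c), ← range_comp]
  simp only [comp_def, toBlocks_shiftZ_mul]
  rfl

end Blocks

theorem isToeplitzFlow_iterate_of_coprime {A : Type} [Fintype A] [TopologicalSpace A]
    [DiscreteTopology A] {x : ℤ → A} (hx : IsToeplitz x) {p : ℕ → ℕ}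
    (hps : IsPeriodStructure x p) {c : ℕ} (hc : 0 < c) (hcop : ∀ k, Nat.Coprime c (p k)) :
    IsToeplitzFlow (orbitClosure x) (shiftMap^[c]) := by
  refine isToeplitzFlow_of_topConj (hx.toBlocks c) ?_
  rw [← image_toBlocks_orbitClosure hps hcop]
  exact topConj_image isClosed_closure.isCompact (continuous_toBlocks c)
    (toBlocks_injective hc).injOn ((mapsTo_shiftMap_orbitClosure x).iterate c)
    fun y _ => toBlocks_shiftMap_iterate c y

theorem statement6_general {A : Type} [Fintype A] [TopologicalSpace A] [DiscreteTopology A]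
    (x : ℤ → A) (hx : IsToeplitz x)
    (p : ℕ → ℕ) (hps : IsPeriodStructure x p)
    (c : ℕ) (hc : 1 ≤ c) :
    IsToeplitzFlow (orbitClosure x) (shiftMap^[c]) ↔ ∀ k, Nat.gcd c (p k) = 1 :=
  ⟨fun hflow => hps.coprime_of_almostPeriods (exists_almostPeriod_of_isToeplitzFlow hflow),
    isToeplitzFlow_iterate_of_coprime hx hps hc⟩

/-- (X, σᶜ) is a Toeplitz flow iff gcd(c, p_k) = 1 for all k. -/
theorem statement6 {A : Type} [Fintype A] [TopologicalSpace A] [DiscreteTopology A]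
    (x : ℤ → A) (hx : IsToeplitz x) (hnp : ¬ IsPeriodicSeq x)
    (p : ℕ → ℕ) (hps : IsPeriodStructure x p)
    (c : ℕ) (hc : 1 ≤ c) :
    IsToeplitzFlow (orbitClosure x) (shiftMap^[c]) ↔ ∀ k, Nat.gcd c (p k) = 1 :=
  statement6_general x hx p hps c hc
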